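/- arXiv:2308.16610 — 3 statements merged into one kernel-verified Lean document; each statement's English description precedes it below -/
import Mathlib

section
/- Let ε_n ≥ 0 with ε_n → ε₀ ≥ 0, and let w_n, w ∈ L²(μ; ℝ^N) with w_n → w weakly in L²(μ; ℝ^N), i.e. ∫_Ω w_n·g dμ → ∫_Ω w·g dμ for every g ∈ L²(μ; ℝ^N). Then liminf_{n→∞} Φ_{ε_n}(w_n) ≥ Φ_{ε₀}(w) (the lower-bound condition (M1) of the Mosco convergence Φ_ε → Φ_{ε₀} on L²(μ; ℝ^N)). -/
/-!
For fixed `ε₀`, `γ_{ε₀}` is convex with a subgradient `g(z) = z / γ_{ε₀}(z)` of norm at most `1`.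
Hence `Φ_{ε₀}(w_n) ≥ Φ_{ε₀}(w) + ⟪w_n - w, α g(w)⟫`, and the bounded field `α g(w)` lies in `L²`,
so the last term tends to `0` by weak convergence. Since `γ_ε(y)` is the Euclidean norm of `(ε, y)`,
it is `1`-Lipschitz in `ε`, so replacing `ε₀` by `ε_n` costs at most `C μ(Ω) |ε_n - ε₀|`.
Finally, a weakly convergent sequence is bounded (Banach–Steinhaus), so `Φ_{ε_n}(w_n)` is bounded
above and its real `liminf` is not a junk value.
-/

open MeasureTheory Filter Topology
open scoped RealInnerProductSpace

/-- The function `γ_ε` of the paper. -/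
noncomputable def smoothNorm {E : Type*} [Norm E] (ε : ℝ) (y : E) : ℝ :=
  √(ε ^ 2 + ‖y‖ ^ 2)

section SmoothNorm

variable {E : Type*} [SeminormedAddCommGroup E]

theorem smoothNorm_eq_norm_toLp (ε : ℝ) (y : E) :
    smoothNorm ε y = ‖WithLp.toLp 2 (ε, y)‖ := by
  simp [WithLp.prod_norm_eq_of_L2, smoothNorm]

theorem smoothNorm_nonneg (ε : ℝ) (y : E) : 0 ≤ smoothNorm ε y := Real.sqrt_nonneg _

theorem sq_smoothNorm (ε : ℝ) (y : E) : smoothNorm ε y ^ 2 = ε ^ 2 + ‖y‖ ^ 2 :=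
  Real.sq_sqrt (by positivity)

theorem norm_le_smoothNorm (ε : ℝ) (y : E) : ‖y‖ ≤ smoothNorm ε y :=
  Real.le_sqrt_of_sq_le (le_add_of_nonneg_left (sq_nonneg ε))

theorem smoothNorm_le_abs_add_norm (ε : ℝ) (y : E) : smoothNorm ε y ≤ |ε| + ‖y‖ :=
  Real.sqrt_le_iff.2 ⟨by positivity, by nlinarith [sq_abs ε, abs_nonneg ε, norm_nonneg y]⟩

theorem abs_smoothNorm_sub_smoothNorm_le (ε ε' : ℝ) (y : E) :
    |smoothNorm ε y - smoothNorm ε' y| ≤ |ε - ε'| := by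
  simpa [smoothNorm_eq_norm_toLp, ← WithLp.toLp_sub, WithLp.prod_norm_eq_of_L2] using
    abs_norm_sub_norm_le (WithLp.toLp 2 (ε, y)) (WithLp.toLp 2 (ε', y))

theorem continuous_smoothNorm (ε : ℝ) : Continuous (smoothNorm ε : E → ℝ) := by
  unfold smoothNorm; fun_prop

end SmoothNorm

section SmoothNormGrad

variable {E : Type*} [NormedAddCommGroup E] [InnerProductSpace ℝ E]

/-- The gradient of `smoothNorm ε`; at the kink `ε = 0, z = 0` it is `0` (as `0⁻¹ = 0`),
which is still a subgradient there. -/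
noncomputable def smoothNormGrad (ε : ℝ) (z : E) : E := (smoothNorm ε z)⁻¹ • z

theorem norm_smoothNormGrad_le_one (ε : ℝ) (z : E) : ‖smoothNormGrad ε z‖ ≤ 1 := by
  rw [smoothNormGrad, norm_smul, Real.norm_of_nonneg (inv_nonneg.2 (smoothNorm_nonneg ε z))]
  exact inv_mul_le_one_of_le₀ (norm_le_smoothNorm ε z) (smoothNorm_nonneg ε z)

theorem smoothNorm_add_inner_smoothNormGrad_le (ε : ℝ) (y z : E) :
    smoothNorm ε z + ⟪smoothNormGrad ε z, y - z⟫ ≤ smoothNorm ε y := by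
  rcases (smoothNorm_nonneg ε z).eq_or_lt with hz | hz
  · simp [smoothNormGrad, ← hz, smoothNorm_nonneg]
  have hcs : ε ^ 2 + ⟪z, y⟫ ≤ smoothNorm ε z * smoothNorm ε y := by
    simpa [smoothNorm_eq_norm_toLp, sq] using
      real_inner_le_norm (WithLp.toLp 2 (ε, z)) (WithLp.toLp 2 (ε, y))
  have key : smoothNorm ε z + ⟪smoothNormGrad ε z, y - z⟫ =
      (ε ^ 2 + ⟪z, y⟫) / smoothNorm ε z := by
    rw [smoothNormGrad, real_inner_smul_left, inner_sub_right, real_inner_self_eq_norm_sq]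
    field_simp
    linear_combination sq_smoothNorm ε z
  rw [key, div_le_iff₀ hz]
  linarith

theorem mul_smoothNorm_add_inner_sub_le {a C : ℝ} (ha : 0 ≤ a) (haC : a ≤ C) (ε₀ ε : ℝ)
    (y z : E) :
    a * smoothNorm ε₀ z + ⟪a • smoothNormGrad ε₀ z, y - z⟫ - C * |ε - ε₀| ≤
      a * smoothNorm ε y := by
  have hgrad := mul_le_mul_of_nonneg_left (smoothNorm_add_inner_smoothNormGrad_le ε₀ y z) ha
  have hlip := mul_le_mul_of_nonneg_left
    (abs_sub_le_iff.1 (abs_smoothNorm_sub_smoothNorm_le ε ε₀ y)).2 ha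
  have hC := mul_le_mul_of_nonneg_right haC (abs_nonneg (ε - ε₀))
  rw [real_inner_smul_left]
  linarith

end SmoothNormGrad

section Integral

variable {Ω : Type*} [MeasurableSpace Ω] {μ : Measure Ω} [IsFiniteMeasure μ]
  {E : Type*} [NormedAddCommGroup E]

theorem integral_norm_le_sqrt_measureReal_mul_norm (u : Lp E 2 μ) :
    ∫ x, ‖u x‖ ∂μ ≤ √(μ.real Set.univ) * ‖u‖ := by
  set v : Lp ℝ 2 μ := (Lp.memLp u).norm.toLp _
  have hv_ae : v =ᵐ[μ] fun x => ‖u x‖ := MemLp.coeFn_toLp _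
  have hv : ⟪v, Lp.const 2 μ (1 : ℝ)⟫ = ∫ x, ‖u x‖ ∂μ := by
    rw [L2.inner_def]
    refine integral_congr_ae ?_
    filter_upwards [hv_ae, Lp.coeFn_const 2 μ (1 : ℝ)] with x h1 h2
    rw [h1, h2]
    simp
  have hnorm_v : ‖v‖ = ‖u‖ := by
    rw [Lp.norm_toLp, Lp.norm_def, eLpNorm_norm]
  have hnorm_one : ‖Lp.const 2 μ (1 : ℝ)‖ ≤ √(μ.real Set.univ) := by
    refine (Lp.norm_const_le _ _ _).trans_eq ?_
    rw [Real.sqrt_eq_rpow]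
    norm_num
  calc ∫ x, ‖u x‖ ∂μ = ⟪v, Lp.const 2 μ (1 : ℝ)⟫ := hv.symm
    _ ≤ ‖v‖ * ‖Lp.const 2 μ (1 : ℝ)‖ := real_inner_le_norm _ _
    _ ≤ ‖u‖ * √(μ.real Set.univ) := by
      rw [hnorm_v]; exact mul_le_mul_of_nonneg_left hnorm_one (norm_nonneg u)
    _ = √(μ.real Set.univ) * ‖u‖ := mul_comm _ _

theorem integrable_smoothNorm_comp (ε : ℝ) (u : Lp E 2 μ) :
    Integrable (fun x => smoothNorm ε (u x)) μ := by
  refine Integrable.mono' ((integrable_const |ε|).add ((Lp.memLp u).integrable one_le_two).norm)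
    ((continuous_smoothNorm ε).comp_aestronglyMeasurable (Lp.aestronglyMeasurable u)) ?_
  filter_upwards with x
  rw [Real.norm_of_nonneg (smoothNorm_nonneg ε _)]
  exact smoothNorm_le_abs_add_norm ε (u x)

variable {α : Ω → ℝ} {C : ℝ}

theorem integrable_mul_smoothNorm_comp (hα_meas : AEStronglyMeasurable α μ)
    (hα : ∀ᵐ x ∂μ, ‖α x‖ ≤ C) (ε : ℝ) (u : Lp E 2 μ) :
    Integrable (fun x => α x * smoothNorm ε (u x)) μ :=
  (integrable_smoothNorm_comp ε u).bdd_mul hα_meas hα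

theorem integral_mul_smoothNorm_comp_le (hα : ∀ᵐ x ∂μ, 0 ≤ α x ∧ α x ≤ C) (hC : 0 ≤ C) (ε : ℝ)
    (u : Lp E 2 μ) :
    ∫ x, α x * smoothNorm ε (u x) ∂μ ≤ C * (|ε| * μ.real Set.univ + √(μ.real Set.univ) * ‖u‖) := by
  have hint := ((integrable_const |ε|).add ((Lp.memLp u).integrable one_le_two).norm).const_mul C
  calc ∫ x, α x * smoothNorm ε (u x) ∂μ ≤ ∫ x, C * (|ε| + ‖u x‖) ∂μ := by
        refine integral_mono_of_nonneg ?_ hint ?_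
        · filter_upwards [hα] with x hx using mul_nonneg hx.1 (smoothNorm_nonneg ε _)
        · filter_upwards [hα] with x hx
          exact mul_le_mul hx.2 (smoothNorm_le_abs_add_norm ε _) (smoothNorm_nonneg ε _) hC
    _ = C * (|ε| * μ.real Set.univ + ∫ x, ‖u x‖ ∂μ) := by
        rw [integral_const_mul, integral_add (integrable_const _)
          ((Lp.memLp u).integrable one_le_two).norm, integral_const, smul_eq_mul, mul_comm |ε|]
    _ ≤ C * (|ε| * μ.real Set.univ + √(μ.real Set.univ) * ‖u‖) := by
        gcongr; exact integral_norm_le_sqrt_measureReal_mul_norm u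

theorem isBoundedUnder_integral_mul_smoothNorm_comp {ι : Type*} {l : Filter ι}
    (hα : ∀ᵐ x ∂μ, 0 ≤ α x ∧ α x ≤ C) (hC : 0 ≤ C) {ε : ι → ℝ} {ε₀ : ℝ}
    (hε : Tendsto ε l (𝓝 ε₀)) {w : ι → Lp E 2 μ} {M : ℝ} (hM : ∀ i, ‖w i‖ ≤ M) :
    IsBoundedUnder (· ≤ ·) l fun i => ∫ x, α x * smoothNorm (ε i) (w i x) ∂μ := by
  have hbound : Tendsto (fun i => C * (|ε i| * μ.real Set.univ + √(μ.real Set.univ) * M))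
      l (𝓝 (C * (|ε₀| * μ.real Set.univ + √(μ.real Set.univ) * M))) :=
    ((hε.abs.mul_const _).add_const _).const_mul C
  refine hbound.isBoundedUnder_le.mono_le (.of_forall fun i => ?_)
  refine (integral_mul_smoothNorm_comp_le hα hC (ε i) (w i)).trans ?_
  dsimp only
  gcongr
  exact hM i

variable [InnerProductSpace ℝ E]

theorem memLp_smul_smoothNormGrad_comp (hα_meas : AEStronglyMeasurable α μ)
    (hα : ∀ᵐ x ∂μ, ‖α x‖ ≤ C) (ε : ℝ) (u : Lp E 2 μ) :
    MemLp (fun x => α x • smoothNormGrad ε (u x)) 2 μ := by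
  have hmeas : AEStronglyMeasurable (fun x => smoothNormGrad ε (u x)) μ :=
    (((continuous_smoothNorm ε).comp_aestronglyMeasurable
      (Lp.aestronglyMeasurable u)).aemeasurable.inv.aestronglyMeasurable).smul
      (Lp.aestronglyMeasurable u)
  refine MemLp.of_bound (hα_meas.smul hmeas) C ?_
  filter_upwards [hα] with x hx
  rw [norm_smul]
  simpa using mul_le_mul hx (norm_smoothNormGrad_le_one ε (u x)) (norm_nonneg _)
    ((norm_nonneg _).trans hx)

theorem integral_mul_smoothNorm_comp_add_inner_sub_le (hα_meas : AEStronglyMeasurable α μ)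
    (hα : ∀ᵐ x ∂μ, 0 ≤ α x ∧ α x ≤ C) (ε₀ ε : ℝ) {u v G : Lp E 2 μ}
    (hG : G =ᵐ[μ] fun x => α x • smoothNormGrad ε₀ (v x)) :
    ∫ x, α x * smoothNorm ε₀ (v x) ∂μ + ⟪u - v, G⟫ - C * |ε - ε₀| * μ.real Set.univ ≤
      ∫ x, α x * smoothNorm ε (u x) ∂μ := by
  have hα_norm : ∀ᵐ x ∂μ, ‖α x‖ ≤ C := hα.mono fun x hx => (Real.norm_of_nonneg hx.1).trans_le hx.2
  have hconst : C * |ε - ε₀| * μ.real Set.univ = ∫ _, C * |ε - ε₀| ∂μ := by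
    rw [integral_const, smul_eq_mul, mul_comm]
  have hint₀ := integrable_mul_smoothNorm_comp hα_meas hα_norm ε₀ v
  have hint : Integrable (fun x => α x * smoothNorm ε₀ (v x) + ⟪G x, (u - v) x⟫) μ :=
    hint₀.add (L2.integrable_inner G (u - v))
  rw [real_inner_comm, L2.inner_def, hconst, ← integral_add hint₀ (L2.integrable_inner G (u - v)),
    ← integral_sub hint (integrable_const _)]
  refine integral_mono_ae (hint.sub (integrable_const _))
    (integrable_mul_smoothNorm_comp hα_meas hα_norm ε u) ?_
  filter_upwards [hα, hG, Lp.coeFn_sub u v] with x hx hGx huv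
  simp only [Pi.sub_apply, hGx, huv]
  exact mul_smoothNorm_add_inner_sub_le hx.1 hx.2 ε₀ ε (u x) (v x)

end Integral

theorem exists_norm_le_of_tendsto_inner {H : Type*} [NormedAddCommGroup H] [InnerProductSpace ℝ H]
    [CompleteSpace H] {w : ℕ → H} {v : H}
    (hw : ∀ g, Tendsto (fun n => ⟪w n, g⟫) atTop (𝓝 ⟪v, g⟫)) : ∃ M, ∀ n, ‖w n‖ ≤ M := by
  obtain ⟨M, hM⟩ := banach_steinhaus (g := fun n => innerSL ℝ (w n)) fun g => by
    obtain ⟨c, hc⟩ := (hw g).norm.bddAbove_range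
    exact ⟨c, fun n => hc ⟨n, rfl⟩⟩
  exact ⟨M, fun n => by simpa [innerSL_apply_norm] using hM n⟩

theorem le_liminf_of_tendsto_of_le {ι β : Type*} [ConditionallyCompleteLinearOrder β]
    [TopologicalSpace β] [OrderTopology β] {f : Filter ι} [f.NeBot] {u v : ι → β} {a : β}
    (hu : Tendsto u f (𝓝 a)) (huv : ∀ᶠ i in f, u i ≤ v i) (hv : IsBoundedUnder (· ≤ ·) f v) :
    a ≤ liminf v f := by
  rw [← hu.liminf_eq]
  exact liminf_le_liminf huv hu.isBoundedUnder_ge hv.isCoboundedUnder_ge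

theorem Phi_eps_Mosco_lower_bound_general (N : ℕ)
    {Ω : Type*} [MeasurableSpace Ω] (μ : Measure Ω) [IsFiniteMeasure μ]
    (α : Ω → ℝ) (hαmeas : Measurable α) (C : ℝ) (hC : 0 ≤ C)
    (hα : ∀ᵐ x ∂μ, 0 ≤ α x ∧ α x ≤ C)
    (ε : ℕ → ℝ) (ε₀ : ℝ)
    (hεconv : Filter.Tendsto ε Filter.atTop (nhds ε₀))
    (w : ℕ → Lp (EuclideanSpace ℝ (Fin N)) 2 μ)
    (wlim : Lp (EuclideanSpace ℝ (Fin N)) 2 μ)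
    (hweak : ∀ g : Lp (EuclideanSpace ℝ (Fin N)) 2 μ,
        Filter.Tendsto (fun n => ∫ x, ⟪(w n) x, g x⟫ ∂μ) Filter.atTop
          (nhds (∫ x, ⟪wlim x, g x⟫ ∂μ))) :
    (∫ x, α x * Real.sqrt (ε₀ ^ 2 + ‖wlim x‖ ^ 2) ∂μ) ≤
      Filter.liminf
        (fun n => ∫ x, α x * Real.sqrt ((ε n) ^ 2 + ‖(w n) x‖ ^ 2) ∂μ)
        Filter.atTop := by
  change ∫ x, α x * smoothNorm ε₀ (wlim x) ∂μ ≤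
    liminf (fun n => ∫ x, α x * smoothNorm (ε n) (w n x) ∂μ) atTop
  simp only [← L2.inner_def] at hweak
  set Φ₀ := ∫ x, α x * smoothNorm ε₀ (wlim x) ∂μ
  have hα_norm : ∀ᵐ x ∂μ, ‖α x‖ ≤ C := hα.mono fun x hx => (Real.norm_of_nonneg hx.1).trans_le hx.2
  have hG_mem := memLp_smul_smoothNormGrad_comp hαmeas.aestronglyMeasurable hα_norm ε₀ wlim
  set G := hG_mem.toLp _
  have hlower : ∀ n, Φ₀ + ⟪w n - wlim, G⟫ - C * |ε n - ε₀| * μ.real Set.univ ≤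
      ∫ x, α x * smoothNorm (ε n) (w n x) ∂μ := fun n =>
    integral_mul_smoothNorm_comp_add_inner_sub_le hαmeas.aestronglyMeasurable hα ε₀ (ε n)
      hG_mem.coeFn_toLp
  have htend : Tendsto (fun n => Φ₀ + ⟪w n - wlim, G⟫ - C * |ε n - ε₀| * μ.real Set.univ)
      atTop (𝓝 Φ₀) := by
    have hinner : Tendsto (fun n => ⟪w n - wlim, G⟫) atTop (𝓝 0) := by
      simpa [inner_sub_left] using (hweak G).sub_const ⟪wlim, G⟫
    have hε : Tendsto (fun n => |ε n - ε₀|) atTop (𝓝 0) := by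
      simpa using (hεconv.sub_const ε₀).abs
    simpa using (hinner.const_add Φ₀).sub ((hε.const_mul C).mul_const (μ.real Set.univ))
  obtain ⟨M, hM⟩ := exists_norm_le_of_tendsto_inner hweak
  exact le_liminf_of_tendsto_of_le htend (.of_forall hlower)
    (isBoundedUnder_integral_mul_smoothNorm_comp hα hC hεconv hM)

/-- Lower-bound condition (M1) of the Mosco convergence `Φ_ε → Φ_{ε₀}`:
if `ε_n ≥ 0`, `ε_n → ε₀ ≥ 0`, and `w_n → w` weakly in `L²(μ; ℝ^N)`, then
`liminf_{n→∞} Φ_{ε_n}(w_n) ≥ Φ_{ε₀}(w)`. -/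
theorem Phi_eps_Mosco_lower_bound (N : ℕ) (hN : 0 < N)
    {Ω : Type*} [MeasurableSpace Ω] (μ : Measure Ω) [IsFiniteMeasure μ]
    (α : Ω → ℝ) (hαmeas : Measurable α) (C : ℝ) (hC : 0 ≤ C)
    (hα : ∀ᵐ x ∂μ, 0 ≤ α x ∧ α x ≤ C)
    (ε : ℕ → ℝ) (hε : ∀ n, 0 ≤ ε n) (ε₀ : ℝ) (hε₀ : 0 ≤ ε₀)
    (hεconv : Filter.Tendsto ε Filter.atTop (nhds ε₀))
    (w : ℕ → Lp (EuclideanSpace ℝ (Fin N)) 2 μ)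
    (wlim : Lp (EuclideanSpace ℝ (Fin N)) 2 μ)
    (hweak : ∀ g : Lp (EuclideanSpace ℝ (Fin N)) 2 μ,
        Filter.Tendsto (fun n => ∫ x, ⟪(w n) x, g x⟫ ∂μ) Filter.atTop
          (nhds (∫ x, ⟪wlim x, g x⟫ ∂μ))) :
    (∫ x, α x * Real.sqrt (ε₀ ^ 2 + ‖wlim x‖ ^ 2) ∂μ) ≤
      Filter.liminf
        (fun n => ∫ x, α x * Real.sqrt ((ε n) ^ 2 + ‖(w n) x‖ ^ 2) ∂μ)
        Filter.atTop :=
  Phi_eps_Mosco_lower_bound_general N μ α hαmeas C hC hα ε ε₀ hεconv w wlim hweak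
end

section
/- Characterization of the subdifferential of Φ_0 on L²: for w, ζ ∈ L²(μ; ℝ^N), the inequality Φ_0(z) ≥ Φ_0(w) + ⟨ζ, z − w⟩_{L²(μ;ℝ^N)} holds for all z ∈ L²(μ; ℝ^N) if and only if there exists a measurable ω : Ω → ℝ^N with |ω(x)| ≤ 1 and ω(x) ∈ Sgn(w(x)) (i.e. ω(x)·w(x) = |w(x)|) for μ-a.e. x ∈ Ω, such that ζ = α ω μ-a.e. in Ω. In particular the domain of ∂Φ_0 is all of L²(μ; ℝ^N). -/
open MeasureTheory
open scoped RealInnerProductSpace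

/-!
Since `Φ_0` is subadditive with `Φ_0(0) = 0`, `ζ` is a subgradient at `w` iff `⟪ζ, v⟫ ≤ Φ_0(v)` for
all `v` and `⟪ζ, w⟫ = Φ_0(w)`. Testing the first condition against `ζ` restricted to measurable sets
gives `|ζ| ≤ α` a.e.; then `ζ·w ≤ α|w|` a.e., so the second condition holds iff `ζ·w = α|w|` a.e.
Both pointwise conditions together say exactly that `ζ = α ω` with `ω ∈ Sgn(w)`: take `ω = ζ/α`
where `α ≠ 0` and `ω = w/|w|` where `α = 0` (there `ζ = 0`).
-/

theorem subgradient_iff_of_subadditive {V : Type*} [AddCommGroup V] {Φ : V → ℝ} (hΦ0 : Φ 0 = 0)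
    (hΦ : ∀ u v, Φ (u + v) ≤ Φ u + Φ v) (ℓ : V →+ ℝ) (w : V) :
    (∀ z, Φ w + ℓ (z - w) ≤ Φ z) ↔ (∀ v, ℓ v ≤ Φ v) ∧ ℓ w = Φ w := by
  constructor
  · intro h
    have hle : ∀ v, ℓ v ≤ Φ v := fun v => by
      have := h (w + v)
      rw [add_sub_cancel_left] at this
      linarith [hΦ w v]
    refine ⟨hle, le_antisymm (hle w) ?_⟩
    have := h 0
    rw [zero_sub, map_neg, hΦ0] at this
    linarith
  · rintro ⟨hle, heq⟩ z
    rw [map_sub, heq]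
    linarith [hle z]

section Selection

variable {E : Type*} [NormedAddCommGroup E] [InnerProductSpace ℝ E]

noncomputable def sgnSelection (a : ℝ) (y ξ : E) : E :=
  if a = 0 then ‖y‖⁻¹ • y else a⁻¹ • ξ

variable {a : ℝ} {y ξ : E}

theorem norm_sgnSelection_le_one (h : ‖ξ‖ ≤ a) : ‖sgnSelection a y ξ‖ ≤ 1 := by
  unfold sgnSelection
  split_ifs with ha
  · rw [norm_smul, norm_inv, norm_norm]
    exact inv_mul_le_one
  · have ha' : 0 < a := ((norm_nonneg ξ).trans h).lt_of_ne' ha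
    rw [norm_smul, norm_inv, Real.norm_of_nonneg ha'.le, inv_mul_le_one₀ ha']
    exact h

theorem inner_sgnSelection (h : ⟪ξ, y⟫ = a * ‖y‖) : ⟪sgnSelection a y ξ, y⟫ = ‖y‖ := by
  unfold sgnSelection
  split_ifs with ha
  · rw [real_inner_smul_left, real_inner_self_eq_norm_sq]
    by_cases hy : ‖y‖ = 0
    · simp [hy]
    · field_simp
  · rw [real_inner_smul_left, h, inv_mul_cancel_left₀ ha]

theorem smul_sgnSelection (h : ‖ξ‖ ≤ a) : a • sgnSelection a y ξ = ξ := by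
  unfold sgnSelection
  split_ifs with ha
  · subst ha
    rw [zero_smul, eq_comm, ← norm_le_zero_iff]
    exact h
  · rw [smul_inv_smul₀ ha]

end Selection

section WeightedNorm

variable {Ω E : Type*} [MeasurableSpace Ω] {μ : Measure Ω} [NormedAddCommGroup E] {α : Ω → ℝ}

theorem integrable_mul_norm_of_ae_bound [IsFiniteMeasure μ] {C : ℝ}
    (hαm : AEStronglyMeasurable α μ) (hα : ∀ᵐ x ∂μ, 0 ≤ α x ∧ α x ≤ C) {p : ENNReal}
    [Fact (1 ≤ p)] (f : Lp E p μ) :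
    Integrable (fun x => α x * ‖f x‖) μ :=
  ((Lp.memLp f).integrable Fact.out).norm.bdd_mul hαm <| hα.mono fun _ hx => by
    rw [Real.norm_of_nonneg hx.1]
    exact hx.2

theorem integral_mul_norm_coeFn_zero {p : ENNReal} :
    ∫ x, α x * ‖(0 : Lp E p μ) x‖ ∂μ = 0 := by
  rw [integral_congr_ae ((Lp.coeFn_zero E p μ).mono fun x hx => by
    rw [hx, Pi.zero_apply, norm_zero, mul_zero])]
  exact integral_zero _ _

theorem integral_mul_norm_add_le (hα0 : ∀ᵐ x ∂μ, 0 ≤ α x) {p : ENNReal} {u v : Lp E p μ}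
    (hu : Integrable (fun x => α x * ‖u x‖) μ) (hv : Integrable (fun x => α x * ‖v x‖) μ) :
    ∫ x, α x * ‖(u + v) x‖ ∂μ ≤ ∫ x, α x * ‖u x‖ ∂μ + ∫ x, α x * ‖v x‖ ∂μ := by
  rw [← integral_add hu hv]
  refine integral_mono_of_nonneg (hα0.mono fun x hx => by positivity) (hu.add hv) ?_
  filter_upwards [hα0, Lp.coeFn_add u v] with x hx hadd
  rw [hadd, Pi.add_apply, ← mul_add]
  exact mul_le_mul_of_nonneg_left (norm_add_le _ _) hx

variable [InnerProductSpace ℝ E]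

theorem forall_inner_le_integral_mul_norm_iff (hα0 : ∀ᵐ x ∂μ, 0 ≤ α x)
    (hint : ∀ f : Lp E 2 μ, Integrable (fun x => α x * ‖f x‖) μ) (ζ : Lp E 2 μ) :
    (∀ v : Lp E 2 μ, ⟪ζ, v⟫ ≤ ∫ x, α x * ‖v x‖ ∂μ) ↔ ∀ᵐ x ∂μ, ‖ζ x‖ ≤ α x := by
  constructor
  · intro h
    have hsq : ∀ᵐ x ∂μ, ‖ζ x‖ ^ 2 ≤ α x * ‖ζ x‖ := by
      have hζsq : Integrable (fun x => ‖ζ x‖ ^ 2) μ :=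
        (L2.integrable_inner (𝕜 := ℝ) ζ ζ).congr (.of_forall fun x => real_inner_self_eq_norm_sq _)
      refine ae_le_of_forall_setIntegral_le hζsq (hint ζ) fun s hs _ => ?_
      set v := ((Lp.memLp ζ).indicator hs).toLp (s.indicator ζ)
      have hv : ⇑v =ᵐ[μ] s.indicator ζ := MemLp.coeFn_toLp _
      rw [← integral_indicator hs, ← integral_indicator hs]
      convert h v using 1
      · rw [L2.inner_def]
        refine integral_congr_ae (hv.mono fun x hx => ?_)
        by_cases hxs : x ∈ s <;> simp [hx, hxs]
      · refine integral_congr_ae (hv.mono fun x hx => ?_)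
        by_cases hxs : x ∈ s <;> simp [hx, hxs]
    filter_upwards [hsq, hα0] with x hx hx0
    rcases (norm_nonneg (ζ x)).eq_or_lt with h0 | hpos
    · rwa [← h0]
    · nlinarith
  · intro h v
    rw [L2.inner_def]
    refine integral_mono_ae (L2.integrable_inner ζ v) (hint v) (h.mono fun x hx => ?_)
    calc ⟪ζ x, v x⟫ ≤ ‖ζ x‖ * ‖v x‖ := real_inner_le_norm _ _
      _ ≤ α x * ‖v x‖ := mul_le_mul_of_nonneg_right hx (norm_nonneg _)

theorem inner_eq_integral_mul_norm_iff {ζ w : Lp E 2 μ} (hζ : ∀ᵐ x ∂μ, ‖ζ x‖ ≤ α x)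
    (hint : Integrable (fun x => α x * ‖w x‖) μ) :
    ⟪ζ, w⟫ = ∫ x, α x * ‖w x‖ ∂μ ↔ ∀ᵐ x ∂μ, ⟪ζ x, w x⟫ = α x * ‖w x‖ := by
  rw [L2.inner_def]
  refine integral_eq_iff_of_ae_le (L2.integrable_inner ζ w) hint (hζ.mono fun x hx => ?_)
  calc ⟪ζ x, w x⟫ ≤ ‖ζ x‖ * ‖w x‖ := real_inner_le_norm _ _
    _ ≤ α x * ‖w x‖ := mul_le_mul_of_nonneg_right hx (norm_nonneg _)

theorem exists_sgn_selection_iff [MeasurableSpace E] [BorelSpace E] (hαm : Measurable α)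
    (hα0 : ∀ᵐ x ∂μ, 0 ≤ α x) {w ζ : Ω → E} (hw : StronglyMeasurable w)
    (hζ : StronglyMeasurable ζ) :
    (∃ ω : Ω → E, Measurable ω ∧ (∀ᵐ x ∂μ, ‖ω x‖ ≤ 1) ∧ (∀ᵐ x ∂μ, ⟪ω x, w x⟫ = ‖w x‖) ∧
        ∀ᵐ x ∂μ, ζ x = α x • ω x) ↔
      (∀ᵐ x ∂μ, ‖ζ x‖ ≤ α x) ∧ ∀ᵐ x ∂μ, ⟪ζ x, w x⟫ = α x * ‖w x‖ := by
  constructor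
  · rintro ⟨ω, -, hω1, hωw, hζω⟩
    constructor
    · filter_upwards [hα0, hω1, hζω] with x hx0 hx1 hx
      rw [hx, norm_smul, Real.norm_of_nonneg hx0]
      exact mul_le_of_le_one_right hx0 hx1
    · filter_upwards [hωw, hζω] with x hxw hx
      rw [hx, real_inner_smul_left, hxw]
  · rintro ⟨hle, heq⟩
    refine ⟨fun x => sgnSelection (α x) (w x) (ζ x), ?_, ?_, ?_, ?_⟩
    · exact (StronglyMeasurable.ite (hαm (measurableSet_singleton 0))
        (hw.norm.measurable.inv.stronglyMeasurable.smul hw)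
        (hαm.inv.stronglyMeasurable.smul hζ)).measurable
    · exact hle.mono fun x hx => norm_sgnSelection_le_one hx
    · exact heq.mono fun x hx => inner_sgnSelection hx
    · exact hle.mono fun x hx => (smul_sgnSelection hx).symm

end WeightedNorm

theorem subdifferential_Phi_zero_general (N : ℕ)
    {Ω : Type*} [MeasurableSpace Ω] (μ : Measure Ω) [IsFiniteMeasure μ]
    (α : Ω → ℝ) (hαmeas : Measurable α) (C : ℝ)
    (hα : ∀ᵐ x ∂μ, 0 ≤ α x ∧ α x ≤ C)
    (w ζ : Lp (EuclideanSpace ℝ (Fin N)) 2 μ) :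
    (∀ z : Lp (EuclideanSpace ℝ (Fin N)) 2 μ,
        (∫ x, α x * ‖w x‖ ∂μ) + ∫ x, ⟪ζ x, z x - w x⟫ ∂μ ≤ ∫ x, α x * ‖z x‖ ∂μ) ↔
      ∃ ω : Ω → EuclideanSpace ℝ (Fin N), Measurable ω ∧
        (∀ᵐ x ∂μ, ‖ω x‖ ≤ 1) ∧
        (∀ᵐ x ∂μ, ⟪ω x, w x⟫ = ‖w x‖) ∧
        (∀ᵐ x ∂μ, ζ x = α x • ω x) := by
  have hα0 : ∀ᵐ x ∂μ, 0 ≤ α x := hα.mono fun _ hx => hx.1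
  have hint := integrable_mul_norm_of_ae_bound (E := EuclideanSpace ℝ (Fin N))
    hαmeas.aestronglyMeasurable hα (p := 2)
  have hinner : ∀ z : Lp (EuclideanSpace ℝ (Fin N)) 2 μ,
      ∫ x, ⟪ζ x, z x - w x⟫ ∂μ = ⟪ζ, z - w⟫ := fun z => by
    rw [L2.inner_def]
    exact integral_congr_ae ((Lp.coeFn_sub z w).mono fun x hx => by simp only [hx, Pi.sub_apply])
  simp_rw [hinner]
  rw [exists_sgn_selection_iff hαmeas hα0 (Lp.stronglyMeasurable w) (Lp.stronglyMeasurable ζ)]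
  refine (subgradient_iff_of_subadditive (Φ := fun f => ∫ x, α x * ‖f x‖ ∂μ)
    integral_mul_norm_coeFn_zero (fun u v => integral_mul_norm_add_le hα0 (hint u) (hint v))
    (innerₛₗ ℝ ζ).toAddMonoidHom w).trans ?_
  exact (and_congr_left' (forall_inner_le_integral_mul_norm_iff hα0 hint ζ)).trans
    (and_congr_right (inner_eq_integral_mul_norm_iff · (hint w)))

/-- Characterization of the subdifferential of `Φ_0` on `L²(μ; ℝ^N)`:
`ζ ∈ ∂Φ_0(w)` iff there is a measurable `ω : Ω → ℝ^N` with `|ω| ≤ 1` and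
`ω·w = |w|` (i.e. `ω ∈ Sgn(w)`) μ-a.e., such that `ζ = α ω` μ-a.e. -/
theorem subdifferential_Phi_zero (N : ℕ) (hN : 0 < N)
    {Ω : Type*} [MeasurableSpace Ω] (μ : Measure Ω) [IsFiniteMeasure μ]
    (α : Ω → ℝ) (hαmeas : Measurable α) (C : ℝ) (hC : 0 ≤ C)
    (hα : ∀ᵐ x ∂μ, 0 ≤ α x ∧ α x ≤ C)
    (w ζ : Lp (EuclideanSpace ℝ (Fin N)) 2 μ) :
    (∀ z : Lp (EuclideanSpace ℝ (Fin N)) 2 μ,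
        (∫ x, α x * ‖w x‖ ∂μ) + ∫ x, ⟪ζ x, z x - w x⟫ ∂μ ≤ ∫ x, α x * ‖z x‖ ∂μ) ↔
      ∃ ω : Ω → EuclideanSpace ℝ (Fin N), Measurable ω ∧
        (∀ᵐ x ∂μ, ‖ω x‖ ≤ 1) ∧
        (∀ᵐ x ∂μ, ⟪ω x, w x⟫ = ‖w x‖) ∧
        (∀ᵐ x ∂μ, ζ x = α x • ω x) :=
  subdifferential_Phi_zero_general N μ α hαmeas C hα w ζ
end

section
/- Single-valuedness of the subdifferential of Φ_ε on L² for ε > 0: for ε > 0 and w, ζ ∈ L²(μ; ℝ^N), the inequality Φ_ε(z) ≥ Φ_ε(w) + ⟨ζ, z − w⟩_{L²(μ;ℝ^N)} holds for all z ∈ L²(μ; ℝ^N) if and only if ζ(x) = α(x) · w(x)/√(ε² + |w(x)|²) for μ-a.e. x ∈ Ω; that is, ∂Φ_ε(w) = {α ∇γ_ε(w)} for every w ∈ L²(μ; ℝ^N). -/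
open MeasureTheory
open scoped ENNReal RealInnerProductSpace

/-! With `γ_ε = smoothedNorm ε`, testing the subgradient inequality against `z = w + 𝟙_S • y` for
measurable `S` and fixed `y` localizes it: `ζ ∈ ∂Φ_ε(w)` iff for a.e. `x`, `ζ x` is a subgradient
of `α x • γ_ε` at `w x` (continuity in `y` and a countable dense set of `y`s take care of all `y`
at once). For `ε ≠ 0`, `γ_ε` is convex and differentiable, so its only subgradient at `b` is its
gradient `b / γ_ε b`; convexity comes from Cauchy–Schwarz, `ε² + ⟪b, a⟫ ≤ γ_ε b * γ_ε a`. -/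

theorem HasFDerivAt.eq_of_forall_le_sub {E : Type*} [NormedAddCommGroup E] [NormedSpace ℝ E]
    {f : E → ℝ} {f' φ : StrongDual ℝ E} {b : E} (hf : HasFDerivAt f f' b)
    (hφ : ∀ y, φ y ≤ f (b + y) - f b) : φ = f' := by
  have hmin : IsLocalMin (fun y => f (b + y) - f b - φ y) 0 :=
    Filter.Eventually.of_forall fun y => by simpa using hφ y
  have hderiv : HasFDerivAt (fun y => f (b + y) - f b - φ y) (f' - φ) 0 :=
    (((hasFDerivAt_comp_add_left b).2 (by simpa using hf)).sub_const (f b)).sub φ.hasFDerivAt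
  exact (sub_eq_zero.1 (hmin.hasFDerivAt_eq_zero hderiv)).symm

noncomputable def smoothedNorm {E : Type*} [NormedAddCommGroup E] (ε : ℝ) (y : E) : ℝ :=
  √(ε ^ 2 + ‖y‖ ^ 2)

section SmoothedNorm

variable {E : Type*} [NormedAddCommGroup E] {ε : ℝ}

@[fun_prop]
theorem continuous_smoothedNorm : Continuous (smoothedNorm (E := E) ε) := by
  unfold smoothedNorm; fun_prop

theorem smoothedNorm_nonneg (y : E) : 0 ≤ smoothedNorm ε y :=
  Real.sqrt_nonneg _

theorem smoothedNorm_pos (hε : ε ≠ 0) (y : E) : 0 < smoothedNorm ε y := by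
  unfold smoothedNorm; positivity

theorem smoothedNorm_le (y : E) : smoothedNorm ε y ≤ |ε| + ‖y‖ := by
  refine Real.sqrt_le_iff.2 ⟨by positivity, ?_⟩
  nlinarith [sq_abs ε, abs_nonneg ε, norm_nonneg y]

variable [InnerProductSpace ℝ E]

theorem hasFDerivAt_smoothedNorm (hε : ε ≠ 0) (b : E) :
    HasFDerivAt (smoothedNorm ε) ((smoothedNorm ε b)⁻¹ • innerSL ℝ b) b := by
  have h : HasFDerivAt (smoothedNorm ε) ((1 / (2 * smoothedNorm ε b)) • 2 • innerSL ℝ b) b :=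
    ((hasStrictFDerivAt_norm_sq b).hasFDerivAt.const_add (ε ^ 2)).sqrt (by positivity)
  convert h using 1
  rw [← ofNat_smul_eq_nsmul ℝ, smul_smul]
  congr 1
  field_simp

theorem sq_add_inner_le_smoothedNorm_mul (a b : E) :
    ε ^ 2 + ⟪b, a⟫ ≤ smoothedNorm ε b * smoothedNorm ε a := by
  rw [smoothedNorm, smoothedNorm, ← Real.sqrt_mul (by positivity)]
  refine (add_le_add_right (real_inner_le_norm b a) _).trans (Real.le_sqrt_of_sq_le ?_)
  nlinarith [sq_nonneg (ε * (‖a‖ - ‖b‖))]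

theorem smoothedNorm_add_inner_le (hε : ε ≠ 0) (a b : E) :
    smoothedNorm ε b + ⟪(smoothedNorm ε b)⁻¹ • b, a - b⟫ ≤ smoothedNorm ε a := by
  have hb := smoothedNorm_pos hε b
  have hsq : smoothedNorm ε b ^ 2 = ε ^ 2 + ‖b‖ ^ 2 := Real.sq_sqrt (by positivity)
  have key := sq_add_inner_le_smoothedNorm_mul (ε := ε) a b
  rw [real_inner_smul_left, inner_sub_right, real_inner_self_eq_norm_sq, ← sub_nonneg]
  field_simp
  nlinarith

theorem forall_inner_le_mul_smoothedNorm_sub_iff (hε : ε ≠ 0) {r : ℝ} (hr : 0 ≤ r) (b c : E) :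
    (∀ a, ⟪c, a - b⟫ ≤ r * smoothedNorm ε a - r * smoothedNorm ε b) ↔
      c = (r / smoothedNorm ε b) • b := by
  constructor
  · intro h
    have hc := ((hasFDerivAt_smoothedNorm hε b).const_mul r).eq_of_forall_le_sub
      (φ := innerSL ℝ c) fun y => by simpa using h (b + y)
    refine ext_inner_right ℝ fun y => ?_
    simpa [smul_smul, div_eq_mul_inv, real_inner_smul_left] using congrArg (· y) hc
  · rintro rfl a
    rw [real_inner_smul_left, div_eq_mul_inv, mul_assoc, ← real_inner_smul_left, ← mul_sub]
    have := smoothedNorm_add_inner_le hε a b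
    exact mul_le_mul_of_nonneg_left (by linarith) hr

end SmoothedNorm

section Localization

variable {Ω E : Type*} [MeasurableSpace Ω] {μ : Measure Ω}

theorem ae_forall_of_forall_ae_of_isClosed [TopologicalSpace E]
    [TopologicalSpace.SeparableSpace E] [Nonempty E] {P : Ω → E → Prop}
    (hP : ∀ x, IsClosed {a | P x a}) (h : ∀ a, ∀ᵐ x ∂μ, P x a) : ∀ᵐ x ∂μ, ∀ a, P x a := by
  obtain ⟨u, hu⟩ := TopologicalSpace.exists_dense_seq E
  filter_upwards [ae_all_iff.2 fun n => h (u n)] with x hx a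
  exact (hP x).closure_subset_iff.2 (Set.range_subset_iff.2 hx) (hu a)

variable [IsFiniteMeasure μ] [NormedAddCommGroup E]

theorem integrable_smoothedNorm_comp (ε : ℝ) {u : Ω → E} (hu : Integrable u μ) :
    Integrable (fun x => smoothedNorm ε (u x)) μ :=
  ((integrable_const |ε|).add hu.norm).mono'
    (continuous_smoothedNorm.comp_aestronglyMeasurable hu.1)
    (ae_of_all _ fun x => by
      simpa [Real.norm_of_nonneg (smoothedNorm_nonneg (u x))] using smoothedNorm_le (u x))

theorem forall_integral_nonneg_iff_ae_forall_nonneg [TopologicalSpace.SeparableSpace E]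
    {p : ℝ≥0∞} {f : Ω → E → ℝ} (hf : ∀ x, Continuous (f x)) (w : Lp E p μ)
    (hfw : ∀ᵐ x ∂μ, f x (w x) = 0) (hint : ∀ z : Lp E p μ, Integrable (fun x => f x (z x)) μ) :
    (∀ z : Lp E p μ, 0 ≤ ∫ x, f x (z x) ∂μ) ↔ ∀ᵐ x ∂μ, ∀ a, 0 ≤ f x a := by
  refine ⟨fun h => ?_, fun h z => integral_nonneg_of_ae (h.mono fun x hx => hx (z x))⟩
  have hbump : ∀ y : E, ∀ {S : Set Ω} (hS : MeasurableSet S),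
      (fun x => f x ((w + indicatorConstLp p hS (measure_ne_top μ S) y) x)) =ᵐ[μ]
        S.indicator fun x => f x (w x + y) := by
    intro y S hS
    filter_upwards [Lp.coeFn_add w (indicatorConstLp p hS (measure_ne_top μ S) y),
      indicatorConstLp_coeFn (p := p) (hs := hS) (hμs := measure_ne_top μ S) (c := y), hfw]
      with x hadd hind hx
    rw [hadd, Pi.add_apply, hind]
    by_cases hxS : x ∈ S <;> simp [hxS, hx]
  have hloc : ∀ y : E, ∀ᵐ x ∂μ, 0 ≤ f x (w x + y) := fun y => by
    refine ae_nonneg_of_forall_setIntegral_nonneg ?_ fun S hS _ => ?_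
    · simpa using (integrable_congr (hbump y MeasurableSet.univ)).1 (hint _)
    · rw [← integral_indicator hS, ← integral_congr_ae (hbump y hS)]
      exact h _
  have hclosed : ∀ x, IsClosed {y | 0 ≤ f x (w x + y)} := fun x =>
    isClosed_le continuous_const ((hf x).comp (continuous_const_add (w x)))
  filter_upwards [ae_forall_of_forall_ae_of_isClosed hclosed hloc] with x hx a
  simpa using hx (a - w x)

end Localization

theorem subdifferential_Phi_eps_general (N : ℕ)
    {Ω : Type*} [MeasurableSpace Ω] (μ : Measure Ω) [IsFiniteMeasure μ]
    (α : Ω → ℝ) (hαmeas : Measurable α) (C : ℝ)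
    (hα : ∀ᵐ x ∂μ, 0 ≤ α x ∧ α x ≤ C)
    (ε : ℝ) (hε : 0 < ε)
    (w ζ : Lp (EuclideanSpace ℝ (Fin N)) 2 μ) :
    (∀ z : Lp (EuclideanSpace ℝ (Fin N)) 2 μ,
        (∫ x, α x * Real.sqrt (ε ^ 2 + ‖w x‖ ^ 2) ∂μ) + ∫ x, ⟪ζ x, z x - w x⟫ ∂μ ≤
          ∫ x, α x * Real.sqrt (ε ^ 2 + ‖z x‖ ^ 2) ∂μ) ↔
      (∀ᵐ x ∂μ, ζ x = (α x / Real.sqrt (ε ^ 2 + ‖w x‖ ^ 2)) • w x) := by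
  simp only [← smoothedNorm.eq_1]
  have hαC : ∀ᵐ x ∂μ, ‖α x‖ ≤ C := hα.mono fun x hx => (Real.norm_of_nonneg hx.1).trans_le hx.2
  have hΦ (z : Lp (EuclideanSpace ℝ (Fin N)) 2 μ) :
      Integrable (fun x => α x * smoothedNorm ε (z x)) μ :=
    (integrable_smoothedNorm_comp ε ((Lp.memLp z).integrable one_le_two)).bdd_mul
      hαmeas.aestronglyMeasurable hαC
  have hpair (z : Lp (EuclideanSpace ℝ (Fin N)) 2 μ) :
      Integrable (fun x => ⟪ζ x, z x - w x⟫) μ :=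
    (L2.integrable_inner ζ (z - w)).congr <| by
      filter_upwards [Lp.coeFn_sub z w] with x hx
      rw [hx, Pi.sub_apply]
  set f : Ω → EuclideanSpace ℝ (Fin N) → ℝ :=
    fun x a => α x * smoothedNorm ε a - α x * smoothedNorm ε (w x) - ⟪ζ x, a - w x⟫
  have hf (z : Lp (EuclideanSpace ℝ (Fin N)) 2 μ) : Integrable (fun x => f x (z x)) μ :=
    ((hΦ z).sub' (hΦ w)).sub' (hpair z)
  calc _ ↔ ∀ z : Lp (EuclideanSpace ℝ (Fin N)) 2 μ, 0 ≤ ∫ x, f x (z x) ∂μ :=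
        forall_congr' fun z => by
          simp only [f]
          rw [integral_sub ((hΦ z).sub' (hΦ w)) (hpair z), integral_sub (hΦ z) (hΦ w)]
          constructor <;> intro h <;> linarith
    _ ↔ ∀ᵐ x ∂μ, ∀ a, 0 ≤ f x a :=
        forall_integral_nonneg_iff_ae_forall_nonneg (fun x => by fun_prop) w
          (ae_of_all _ fun x => by simp [f]) hf
    _ ↔ _ := Filter.eventually_congr <| hα.mono fun x hx => by
        simpa only [f, sub_nonneg] using
          forall_inner_le_mul_smoothedNorm_sub_iff hε.ne' hx.1 (w x) (ζ x)

/-- Single-valuedness of the subdifferential of `Φ_ε` on `L²(μ; ℝ^N)` for `ε > 0`: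
`ζ ∈ ∂Φ_ε(w)` iff `ζ(x) = α(x) · w(x)/√(ε² + |w(x)|²)` μ-a.e.; that is,
`∂Φ_ε(w) = {α ∇γ_ε(w)}`. -/
theorem subdifferential_Phi_eps (N : ℕ) (hN : 0 < N)
    {Ω : Type*} [MeasurableSpace Ω] (μ : Measure Ω) [IsFiniteMeasure μ]
    (α : Ω → ℝ) (hαmeas : Measurable α) (C : ℝ) (hC : 0 ≤ C)
    (hα : ∀ᵐ x ∂μ, 0 ≤ α x ∧ α x ≤ C)
    (ε : ℝ) (hε : 0 < ε)
    (w ζ : Lp (EuclideanSpace ℝ (Fin N)) 2 μ) :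
    (∀ z : Lp (EuclideanSpace ℝ (Fin N)) 2 μ,
        (∫ x, α x * Real.sqrt (ε ^ 2 + ‖w x‖ ^ 2) ∂μ) + ∫ x, ⟪ζ x, z x - w x⟫ ∂μ ≤
          ∫ x, α x * Real.sqrt (ε ^ 2 + ‖z x‖ ^ 2) ∂μ) ↔
      (∀ᵐ x ∂μ, ζ x = (α x / Real.sqrt (ε ^ 2 + ‖w x‖ ^ 2)) • w x) :=
  subdifferential_Phi_eps_general N μ α hαmeas C hα ε hε w ζ
end
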